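/- arXiv:2401.03432 — 4 statements merged into one kernel-verified Lean document; each statement's English description precedes it below -/
import Mathlib

section
/- For w in the Weyl group of SO(2m) acting on Z^m by permutations and even sign changes, and a dominant weight μ = (μ₁,…,μ_m) with μ₁ ≥ ⋯ ≥ μ_{m-1} ≥ |μ_m|, if w(μ+ρ_c) - ρ_c = (ℓ,0,…,0) for some natural number ℓ, where ρ_c = (m-1, m-2, …, 1, 0), and w has the property that wν is dominant for the positive system of U(m) (i.e., weakly decreasing) whenever ν is dominant for SO(2m), then w = e and μ = (ℓ,0,…,0). -/
/-- `ν` is a dominant weight for `SO(2m)`: `ν₁ ≥ ν₂ ≥ ⋯ ≥ ν_{m-1} ≥ |ν_m|`. -/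
def IsSODominant (m : ℕ) (ν : Fin m → ℤ) : Prop :=
  (∀ i : ℕ, (h : i + 1 < m) → ν ⟨i + 1, h⟩ ≤ ν ⟨i, by omega⟩) ∧
  (∀ h : 2 ≤ m, -ν ⟨m - 1, by omega⟩ ≤ ν ⟨m - 2, by omega⟩)

/-- `ν` is dominant for `U(m)`: weakly decreasing. -/
def IsUDominant (m : ℕ) (ν : Fin m → ℤ) : Prop :=
  ∀ i : ℕ, (h : i + 1 < m) → ν ⟨i + 1, h⟩ ≤ ν ⟨i, by omega⟩

/-- `ρ_c = (m-1, m-2, …, 1, 0)`. -/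
def rhoc (m : ℕ) : Fin m → ℤ := fun i => (m : ℤ) - 1 - (i : ℕ)

/-- An element of the Weyl group of type `D_m` (permutation with an even number of
sign changes) sending `SO(2m)`-dominant weights to weakly decreasing sequences which
satisfies `w(μ+ρ_c) - ρ_c = (ℓ,0,…,0)` for an `SO(2m)`-dominant `μ` must be the
identity, and then `μ = (ℓ,0,…,0)`. -/
theorem stmt0 {m : ℕ} (hm : 2 ≤ m)
    (σ : Equiv.Perm (Fin m)) (ε : Fin m → ℤ)
    (hε : ∀ i, ε i = 1 ∨ ε i = -1)
    (heven : Even (Finset.univ.filter (fun i => ε i = -1)).card)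
    (hW : ∀ ν : Fin m → ℤ, IsSODominant m ν →
      IsUDominant m (fun i => ε i * ν (σ i)))
    (μ : Fin m → ℤ) (hμ : IsSODominant m μ) (ℓ : ℕ)
    (hw : ∀ i : Fin m,
      ε i * (μ (σ i) + rhoc m (σ i)) - rhoc m i = if (i : ℕ) = 0 then (ℓ : ℤ) else 0) :
    σ = 1 ∧ (ε = fun _ => 1) ∧ (μ = fun i : Fin m => if (i : ℕ) = 0 then (ℓ : ℤ) else 0) := by
  classical
  set lam : Fin m → ℤ := fun j => μ j + rhoc m j with hlamdef
  set C : Fin m → ℤ := fun i => ((m : ℤ) - 1 - (i : ℕ)) + (if (i : ℕ) = 0 then (ℓ : ℤ) else 0)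
    with hCdef
  have heq : ∀ i : Fin m, ε i * lam (σ i) = C i := by
    intro i
    have := hw i
    simp only [hlamdef, hCdef, rhoc] at this ⊢
    omega
  -- consecutive strict decrease of lam
  have hstep : ∀ k, (h : k + 1 < m) → lam ⟨k + 1, h⟩ < lam ⟨k, by omega⟩ := by
    intro k h
    have h1 := hμ.1 k h
    simp only [hlamdef, rhoc]
    push_cast
    omega
  -- full strict anti
  have hanti : ∀ (a b : ℕ) (ha : a < m) (hb : b < m), a < b →
      lam ⟨b, hb⟩ < lam ⟨a, ha⟩ := by
    intro a b
    induction b with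
    | zero => omega
    | succ n ih =>
      intro ha hb hab
      rcases Nat.lt_or_ge a n with h | h
      · exact (hstep n hb).trans (ih ha (by omega) h)
      · have : a = n := by omega
        subst this
        exact hstep a hb
  have hm1 : m - 1 < m := by omega
  have hm2 : m - 2 < m := by omega
  have hsum : 0 < lam ⟨m - 2, hm2⟩ + lam ⟨m - 1, hm1⟩ := by
    have h2 := hμ.2 hm
    simp only [hlamdef, rhoc]
    have c1 : ((m - 1 : ℕ) : ℤ) = (m : ℤ) - 1 := by omega
    have c2 : ((m - 2 : ℕ) : ℤ) = (m : ℤ) - 2 := by omega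
    rw [c1, c2]
    omega
  have hlast : lam ⟨m - 1, hm1⟩ < lam ⟨m - 2, hm2⟩ := hanti _ _ _ _ (by omega)
  have hpos2 : 0 < lam ⟨m - 2, hm2⟩ := by omega
  -- lam j > 0 for j ≤ m - 2
  have hpos : ∀ j : Fin m, (j : ℕ) < m - 1 → 0 < lam j := by
    intro j hj
    rcases Nat.lt_or_ge (j : ℕ) (m - 2) with h | h
    · have := hanti (j : ℕ) (m - 2) j.isLt hm2 h
      have hje : (⟨(j : ℕ), j.isLt⟩ : Fin m) = j := rfl
      rw [hje] at this
      omega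
    · have : (j : ℕ) = m - 2 := by omega
      have hje : j = ⟨m - 2, hm2⟩ := Fin.ext this
      rw [hje]; exact hpos2
  -- strict anti of |lam|
  have habsanti : ∀ (a b : Fin m), a < b → |lam b| < |lam a| := by
    intro a b hab
    have hb : (b : ℕ) < m := b.isLt
    have habn : (a : ℕ) < (b : ℕ) := hab
    have ha1 : (a : ℕ) < m - 1 := by omega
    have hpa : 0 < lam a := hpos a ha1
    rw [abs_of_pos hpa]
    have hba : lam b < lam a := by
      have := hanti (a : ℕ) (b : ℕ) a.isLt b.isLt habn
      simpa using this
    rcases Nat.lt_or_ge (b : ℕ) (m - 1) with h | h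
    · rw [abs_of_pos (hpos b h)]; exact hba
    · have : (b : ℕ) = m - 1 := by omega
      have hbe : b = ⟨m - 1, hm1⟩ := Fin.ext this
      subst hbe
      rw [abs_lt]
      constructor
      · -- -lam a < lam (m-1), i.e. need lam a > -lam_{m-1}
        have hale : lam ⟨m - 2, hm2⟩ ≤ lam a := by
          rcases Nat.lt_or_ge (a : ℕ) (m - 2) with h' | h'
          · have := hanti (a : ℕ) (m - 2) a.isLt hm2 h'
            simpa using this.le
          · have ha2 : (a : ℕ) = m - 2 := by omega
            have h2 : a = (⟨m - 2, hm2⟩ : Fin m) := Fin.ext ha2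
            rw [h2]
        omega
      · exact hba
  -- C nonneg and strictly anti
  have hCnn : ∀ i : Fin m, 0 ≤ C i := by
    intro i
    have := i.isLt
    simp only [hCdef]
    split <;> omega
  have hCanti : ∀ (a b : Fin m), a < b → C b < C a := by
    intro a b hab
    have h1 : (a : ℕ) < (b : ℕ) := hab
    have h2 := b.isLt
    simp only [hCdef]
    have hb0 : ¬ ((b : ℕ) = 0) := by omega
    rw [if_neg hb0]
    split <;> omega
  -- |lam (σ i)| = C i
  have habs : ∀ i : Fin m, |lam (σ i)| = C i := by
    intro i
    have h1 := heq i
    rcases hε i with h | h <;> rw [h] at h1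
    · rw [one_mul] at h1
      rw [h1, abs_of_nonneg (hCnn i)]
    · rw [neg_one_mul, neg_eq_iff_eq_neg] at h1
      rw [h1, abs_neg, abs_of_nonneg (hCnn i)]
  -- σ is strictly monotone
  have hmono : StrictMono σ := by
    intro a b hab
    have h1 : |lam (σ b)| < |lam (σ a)| := by
      rw [habs a, habs b]; exact hCanti a b hab
    rcases lt_trichotomy (σ a) (σ b) with h | h | h
    · exact h
    · exact absurd (σ.injective h) (ne_of_lt hab)
    · exact absurd (habsanti _ _ h) (by simp; exact h1.le)
  haveI : WellFoundedLT (Fin m) := Finite.to_wellFoundedLT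
  have hσ : σ = 1 := by
    have hid : (σ : Fin m → Fin m) = id := by
      apply (hmono.range_inj strictMono_id).1
      rw [Set.range_id]
      exact Set.range_eq_univ.2 σ.surjective
    ext i
    have h := congrFun hid i
    exact congrArg Fin.val h
  subst hσ
  simp only [Equiv.Perm.one_apply] at heq
  -- ε i = 1 for i < m - 1
  have hε1 : ∀ i : Fin m, (i : ℕ) < m - 1 → ε i = 1 := by
    intro i hi
    rcases hε i with h | h
    · exact h
    · exfalso
      have h1 := heq i
      rw [h] at h1
      have h2 : 0 < lam i := hpos i hi
      have h3 : 0 < C i := by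
        simp only [hCdef]
        have := i.isLt
        split <;> omega
      omega
  -- last ε is 1 by parity
  have hεall : ∀ i : Fin m, ε i = 1 := by
    intro i
    by_contra hne
    have hie : ε i = -1 := (hε i).resolve_left hne
    have him : (i : ℕ) = m - 1 := by
      by_contra h
      have : (i : ℕ) < m - 1 := by have := i.isLt; omega
      exact hne (hε1 i this)
    have hfilter : (Finset.univ.filter (fun j => ε j = -1)) = {i} := by
      apply Finset.ext
      intro j
      simp only [Finset.mem_filter, Finset.mem_univ, true_and, Finset.mem_singleton]
      constructor
      · intro hj
        by_contra hji
        have : (j : ℕ) ≠ m - 1 := fun h => hji (Fin.ext (h.trans him.symm))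
        have hjlt : (j : ℕ) < m - 1 := by have := j.isLt; omega
        rw [hε1 j hjlt] at hj
        omega
      · intro hj; rw [hj]; exact hie
    rw [hfilter] at heven
    simp at heven
  refine ⟨rfl, funext hεall, ?_⟩
  funext i
  have h1 := heq i
  rw [hεall i, one_mul] at h1
  simp only [hlamdef, hCdef, rhoc] at h1
  omega
end

section
/- Every element w of W_K^{l∩k} (elements of the Weyl group of type D_m sending SO(2m)-dominant weights to weakly decreasing sequences) acts on a dominant weight μ by deleting an even number of entries μ_{j₁},…,μ_{j_{2r}} (with j₁ < ⋯ < j_{2r}) from their positions and appending their negatives -μ_{j_{2r}},…,-μ_{j₁} at the end in reverse order, preserving the relative order of the remaining entries. -/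
/-- If a list is pairwise `r` and failing `p` propagates along `r`, then every element
of `dropWhile p` fails `p`. -/
lemma dropWhile_all_false {α : Type*} (p : α → Bool) (r : α → α → Prop)
    (hpr : ∀ a b, r a b → p a = false → p b = false) :
    ∀ l : List α, List.Pairwise r l → ∀ x ∈ l.dropWhile p, p x = false := by
  intro l
  induction l with
  | nil => simp
  | cons a t ih =>
    intro hp x hx
    rw [List.dropWhile_cons] at hx
    by_cases hpa : p a = true
    · rw [if_pos hpa] at hx
      exact ih (List.pairwise_cons.mp hp).2 x hx
    · have hpaf : p a = false := by simpa using hpa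
      rw [hpaf] at hx
      simp only [Bool.false_eq_true, if_false] at hx
      rcases List.mem_cons.mp hx with rfl | hx
      · exact hpaf
      · exact hpr a x ((List.pairwise_cons.mp hp).1 x hx) hpaf

/-- Any element `w = (σ, ε)` of the Weyl group of type `D_m` sending every
`SO(2m)`-dominant weight to a weakly decreasing sequence acts by deleting an even
number of entries (at an index set `J`) and appending their negatives at the end in
reverse order, preserving the relative order of the remaining entries. -/
theorem stmt1 {m : ℕ} (hm : 2 ≤ m)
    (σ : Equiv.Perm (Fin m)) (ε : Fin m → ℤ)
    (hε : ∀ i, ε i = 1 ∨ ε i = -1)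
    (heven : Even (Finset.univ.filter (fun i => ε i = -1)).card)
    (hW : ∀ ν : Fin m → ℤ, IsSODominant m ν →
      IsUDominant m (fun i => ε i * ν (σ i))) :
    ∃ J : Finset (Fin m), Even J.card ∧
      ∀ μ : Fin m → ℤ, IsSODominant m μ →
        List.ofFn (fun i => ε i * μ (σ i)) =
          (((List.finRange m).filter (fun i => i ∉ J)).map μ) ++
          ((((List.finRange m).filter (fun i => i ∈ J)).map (fun i => -μ i)).reverse) := by
  set J : Finset (Fin m) := Finset.univ.filter (fun j => ε (σ.symm j) = -1) with hJ
  have hmemJ : ∀ i, σ i ∈ J ↔ ε i = -1 := by intro i; simp [hJ]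
  have hnotJ : ∀ i, σ i ∉ J ↔ ε i = 1 := by
    intro i
    rcases hε i with h | h <;> simp [hmemJ, h]
  refine ⟨J, ?_, ?_⟩
  · have : J = (Finset.univ.filter (fun i => ε i = -1)).image σ := by
      ext j
      simp only [hJ, Finset.mem_filter, Finset.mem_univ, true_and, Finset.mem_image]
      constructor
      · intro h; exact ⟨σ.symm j, h, by simp⟩
      · rintro ⟨i, h, rfl⟩; simpa using h
    rw [this, Finset.card_image_of_injective _ σ.injective]
    exact heven
  -- the test weight
  have hν0 : IsSODominant m (fun i : Fin m => (m : ℤ) - i) := by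
    constructor
    · intro i h
      simp only []
      push_cast
      omega
    · intro h
      simp only []
      push_cast [Nat.cast_sub (by omega : 1 ≤ m), Nat.cast_sub (by omega : 2 ≤ m)]
      omega
  have hd := hW _ hν0
  -- the key order relation
  set R : Fin m → Fin m → Prop :=
    fun a b => if a ∈ J then b ∈ J ∧ b < a else (b ∉ J → a < b) with hR
  have hR1 : ∀ a b : Fin m, a ∉ J → (b ∉ J → a < b) → R a b := by
    intro a b ha h
    simp only [hR]
    rw [if_neg ha]
    exact h
  have hR2 : ∀ a b : Fin m, a ∈ J → b ∈ J → b < a → R a b := by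
    intro a b ha hb h
    simp only [hR]
    rw [if_pos ha]
    exact ⟨hb, h⟩
  have hRe1 : ∀ a b : Fin m, R a b → a ∈ J → b ∈ J ∧ b < a := by
    intro a b hr ha
    simp only [hR] at hr
    rwa [if_pos ha] at hr
  have hRe2 : ∀ a b : Fin m, R a b → a ∉ J → b ∉ J → a < b := by
    intro a b hr ha hb
    simp only [hR] at hr
    rw [if_neg ha] at hr
    exact hr hb
  have htrans : Transitive R := by
    intro a b c hab hbc
    by_cases ha : a ∈ J
    · obtain ⟨hb, hba⟩ := hRe1 a b hab ha
      obtain ⟨hc, hcb⟩ := hRe1 b c hbc hb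
      exact hR2 a c ha hc (hcb.trans hba)
    · refine hR1 a c ha ?_
      intro hc
      by_cases hb : b ∈ J
      · exact absurd (hRe1 b c hbc hb).1 hc
      · exact (hRe2 a b hab ha hb).trans (hRe2 b c hbc hb hc)
  -- the chain property
  set l : List (Fin m) := (List.finRange m).map σ with hl
  have hchain : List.Chain' R l := by
    rw [hl]; show List.IsChain R _; rw [List.isChain_map, List.isChain_iff_getElem]
    intro i hi
    simp only [List.length_finRange] at hi
    have h2 : i + 1 < m := by omega
    have h1 : i < m := by omega
    rw [List.getElem_finRange, List.getElem_finRange]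
    show R (σ ⟨i, h1⟩) (σ ⟨i + 1, h2⟩)
    have key : ε ⟨i + 1, h2⟩ * ((m : ℤ) - ((σ ⟨i + 1, h2⟩ : Fin m) : ℕ)) ≤
        ε ⟨i, h1⟩ * ((m : ℤ) - ((σ ⟨i, h1⟩ : Fin m) : ℕ)) := hd i h2
    have hne : σ ⟨i, h1⟩ ≠ σ ⟨i + 1, h2⟩ := by
      intro h
      have := σ.injective h
      simp only [Fin.mk.injEq] at this
      omega
    have hvne : ((σ ⟨i, h1⟩ : Fin m) : ℕ) ≠ ((σ ⟨i + 1, h2⟩ : Fin m) : ℕ) :=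
      fun hv => hne (Fin.ext hv)
    have hva : ((σ ⟨i, h1⟩ : Fin m) : ℕ) < m := Fin.is_lt _
    have hvb : ((σ ⟨i + 1, h2⟩ : Fin m) : ℕ) < m := Fin.is_lt _
    have hvaZ : ((σ ⟨i, h1⟩ : Fin m) : ℤ) < (m : ℤ) := by exact_mod_cast hva
    have hvbZ : ((σ ⟨i + 1, h2⟩ : Fin m) : ℤ) < (m : ℤ) := by exact_mod_cast hvb
    rcases hε ⟨i, h1⟩ with he1 | he1 <;> rcases hε ⟨i + 1, h2⟩ with he2 | he2 <;>
      rw [he1, he2] at key <;> simp only [one_mul, neg_one_mul] at key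
    · -- ε i = 1, ε (i+1) = 1
      refine hR1 _ _ ((hnotJ _).mpr he1) ?_
      intro _
      have hle : ((σ ⟨i, h1⟩ : Fin m) : ℤ) ≤ ((σ ⟨i + 1, h2⟩ : Fin m) : ℤ) := by linarith
      have hlen : ((σ ⟨i, h1⟩ : Fin m) : ℕ) ≤ ((σ ⟨i + 1, h2⟩ : Fin m) : ℕ) := by
        exact_mod_cast hle
      rw [Fin.lt_def]
      omega
    · -- ε i = 1, ε (i+1) = -1
      refine hR1 _ _ ((hnotJ _).mpr he1) ?_
      intro hbn
      exact absurd ((hmemJ _).mpr he2) hbn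
    · -- ε i = -1, ε (i+1) = 1 : impossible
      exfalso
      linarith
    · -- ε i = -1, ε (i+1) = -1
      refine hR2 _ _ ((hmemJ _).mpr he1) ((hmemJ _).mpr he2) ?_
      have hle : ((σ ⟨i + 1, h2⟩ : Fin m) : ℤ) ≤ ((σ ⟨i, h1⟩ : Fin m) : ℤ) := by linarith
      have hlen : ((σ ⟨i + 1, h2⟩ : Fin m) : ℕ) ≤ ((σ ⟨i, h1⟩ : Fin m) : ℕ) := by
        exact_mod_cast hle
      rw [Fin.lt_def]
      omega
  haveI : IsTrans (Fin m) R := ⟨fun _ _ _ h h' => htrans h h'⟩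
  haveI : IsAntisymm (Fin m) (fun a b : Fin m => a < b) :=
    ⟨fun a b h1 h2 => absurd h2 (lt_asymm h1)⟩
  have hpw : List.Pairwise R l := List.isChain_iff_pairwise.mp hchain
  have hnd : l.Nodup := (List.nodup_finRange m).map σ.injective
  set q : Fin m → Bool := fun j => decide (j ∉ J) with hq
  set l₁ : List (Fin m) := l.takeWhile q with hl₁
  set l₂ : List (Fin m) := l.dropWhile q with hl₂
  have hsplit : l₁ ++ l₂ = l := List.takeWhile_append_dropWhile (p := q) (l := l)
  have hl₁mem : ∀ x ∈ l₁, x ∉ J := by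
    intro x hx
    have := List.mem_takeWhile_imp hx
    simpa [hq] using this
  have hpw₁ : List.Pairwise R l₁ := hpw.sublist (List.takeWhile_sublist q)
  have hpw₂ : List.Pairwise R l₂ := hpw.sublist (List.dropWhile_sublist q)
  have hl₂mem : ∀ x ∈ l₂, x ∈ J := by
    intro x hx
    have hpr : ∀ a b : Fin m, R a b → q a = false → q b = false := by
      intro a b hr ha
      have haJ : a ∈ J := by simpa [hq] using ha
      have := (hRe1 a b hr haJ).1
      simp [hq, this]
    have := dropWhile_all_false q R hpr l hpw x (by rwa [← hl₂])
    simpa [hq] using this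
  have hmem_l : ∀ x : Fin m, x ∈ l := by
    intro x
    rw [hl]
    exact List.mem_map.mpr ⟨σ.symm x, List.mem_finRange _, by simp⟩
  have hnd₁ : l₁.Nodup := hnd.sublist (List.takeWhile_sublist q)
  have hnd₂ : l₂.Nodup := hnd.sublist (List.dropWhile_sublist q)
  have hmem₁ : ∀ x : Fin m, x ∈ l₁ ↔ x ∉ J := by
    intro x
    constructor
    · exact hl₁mem x
    · intro hx
      have := hmem_l x
      rw [← hsplit, List.mem_append] at this
      rcases this with h | h
      · exact h
      · exact absurd (hl₂mem x h) hx
  have hmem₂ : ∀ x : Fin m, x ∈ l₂ ↔ x ∈ J := by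
    intro x
    constructor
    · exact hl₂mem x
    · intro hx
      have := hmem_l x
      rw [← hsplit, List.mem_append] at this
      rcases this with h | h
      · exact absurd hx (hl₁mem x h)
      · exact h
  have hsort₁ : List.Pairwise (· < ·) l₁ := by
    refine hpw₁.imp_of_mem ?_
    intro a b ha hb hab
    exact hRe2 a b hab (hl₁mem a ha) (hl₁mem b hb)
  have hsort₂ : List.Pairwise (· < ·) l₂.reverse := by
    rw [List.pairwise_reverse]
    refine hpw₂.imp_of_mem ?_
    intro a b ha hb hab
    exact (hRe1 a b hab (hl₂mem a ha)).2
  have heq₁ : l₁ = (List.finRange m).filter (fun i => i ∉ J) := by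
    refine (fun hp h2 => List.Perm.eq_of_pairwise' hsort₁ h2 hp) ?_ ?_
    · refine (List.perm_ext_iff_of_nodup hnd₁ ((List.nodup_finRange m).filter _)).mpr ?_
      intro x
      rw [hmem₁]
      simp [List.mem_filter]
    · exact List.Pairwise.filter _ (List.pairwise_lt_finRange m)
  have heq₂ : l₂.reverse = (List.finRange m).filter (fun i => i ∈ J) := by
    refine (fun hp h2 => List.Perm.eq_of_pairwise' hsort₂ h2 hp) ?_ ?_
    · refine (List.perm_ext_iff_of_nodup (List.nodup_reverse.mpr hnd₂)
        ((List.nodup_finRange m).filter _)).mpr ?_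
      intro x
      rw [List.mem_reverse, hmem₂]
      simp [List.mem_filter]
    · exact List.Pairwise.filter _ (List.pairwise_lt_finRange m)
  have hldecomp : l = ((List.finRange m).filter (fun i => i ∉ J)) ++
      ((List.finRange m).filter (fun i => i ∈ J)).reverse := by
    rw [← hsplit, heq₁, ← heq₂, List.reverse_reverse]
  -- final assembly
  intro μ _
  have hfn : List.ofFn (fun i => ε i * μ (σ i)) =
      l.map (fun j => if j ∈ J then -μ j else μ j) := by
    rw [List.ofFn_eq_map, hl, List.map_map]
    refine List.map_congr_left ?_
    intro a _
    simp only [Function.comp]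
    rcases hε a with h | h
    · rw [h, one_mul, if_neg ((hnotJ a).mpr h)]
    · rw [h, neg_one_mul, if_pos ((hmemJ a).mpr h)]
  rw [hfn, hldecomp, List.map_append, List.map_reverse]
  congr 1
  · refine List.map_congr_left ?_
    intro a ha
    rw [List.mem_filter] at ha
    have : a ∉ J := by simpa using ha.2
    rw [if_neg this]
  · congr 1
    refine List.map_congr_left ?_
    intro a ha
    rw [List.mem_filter] at ha
    have : a ∈ J := by simpa using ha.2
    rw [if_pos this]
end

section
/- If w is an element of the Weyl group of type D_m that deletes a nonempty even set of entries from a dominant weight μ+ρ_c and appends their negatives at the end (with ρ_c = (m-1,…,1,0)), then the last component of w(μ+ρ_c) - ρ_c equals -(μ_{j₁} + m - j₁), which is strictly negative, where j₁ is the smallest index of a deleted entry. -/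
lemma head_min {α : Type*} [Preorder α] {l : List α} (h : l.Pairwise (·<·)) (hne : l ≠ [])
    {x : α} (hx : x ∈ l) : l.head hne ≤ x := by
  cases l with
  | nil => exact absurd rfl hne
  | cons a t =>
    rcases List.mem_cons.1 hx with rfl | hx
    · exact le_refl _
    · exact le_of_lt ((List.pairwise_cons.1 h).1 x hx)

lemma mu_anti {m : ℕ} (μ : Fin m → ℤ) (hμ : IsSODominant m μ) {i j : Fin m} (hij : i ≤ j) :
    μ j ≤ μ i := by
  obtain ⟨i, hi⟩ := i; obtain ⟨j, hj⟩ := j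
  simp only [Fin.mk_le_mk] at hij
  induction j with
  | zero =>
    have : i = 0 := by omega
    subst this; exact le_refl _
  | succ k ih =>
    rcases Nat.lt_or_ge i (k+1) with h | h
    · exact le_trans (hμ.1 k hj) (ih (by omega) (by omega))
    · have : i = k + 1 := by omega
      subst this; exact le_refl _

/-- If `w` removes a nonempty even set `J` of entries of `μ + ρ_c` (with smallest
removed index `j₁`) and appends their negatives at the end in reverse order, then the
last component of `w(μ+ρ_c) - ρ_c` equals `-(μ_{j₁} + m - 1 - j₁)` (in 0-indexed
notation), which is strictly negative. -/
theorem stmt2 {m : ℕ} (hm : 2 ≤ m)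
    (μ : Fin m → ℤ) (hμ : IsSODominant m μ)
    (J : Finset (Fin m)) (hJne : J.Nonempty) (hJeven : Even J.card)
    (j₁ : Fin m) (hj₁ : j₁ ∈ J) (hmin : ∀ j ∈ J, j₁ ≤ j)
    (w : Fin m → ℤ)
    (hw : List.ofFn w =
      (((List.finRange m).filter (fun i => i ∉ J)).map (fun i => μ i + rhoc m i)) ++
      ((((List.finRange m).filter (fun i => i ∈ J)).map
        (fun i => -(μ i + rhoc m i))).reverse)) :
    w ⟨m - 1, by omega⟩ - rhoc m ⟨m - 1, by omega⟩
      = -(μ j₁ + (m : ℤ) - 1 - (j₁ : ℕ)) ∧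
    w ⟨m - 1, by omega⟩ - rhoc m ⟨m - 1, by omega⟩ < 0 := by
  set L := (List.finRange m).filter (fun i => i ∈ J) with hL
  have hj₁L : j₁ ∈ L := by
    simp [hL, List.mem_filter, List.mem_finRange, hj₁]
  have hLne : L ≠ [] := List.ne_nil_of_mem hj₁L
  have hLpw : L.Pairwise (· < ·) :=
    (List.pairwise_lt_finRange m).sublist List.filter_sublist
  have hhead : L.head hLne = j₁ := by
    refine le_antisymm (head_min hLpw hLne hj₁L) ?_
    have hmem : L.head hLne ∈ L := List.head_mem hLne
    have : L.head hLne ∈ J := by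
      simpa [hL, List.mem_filter] using hmem
    exact hmin _ this
  have hne0 : List.ofFn w ≠ [] := by
    intro h; apply_fun List.length at h; simp at h; omega
  have hne2 : (((List.finRange m).filter (fun i => i ∉ J)).map (fun i => μ i + rhoc m i)) ++
      ((L.map (fun i => -(μ i + rhoc m i))).reverse) ≠ [] := hw ▸ hne0
  have hBne : (L.map (fun i => -(μ i + rhoc m i))).reverse ≠ [] := by
    simp [hLne]
  have hwlast : w ⟨m - 1, by omega⟩ = (List.ofFn w).getLast hne0 := by
    rw [List.getLast_eq_getElem, List.getElem_ofFn]
    congr 1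
    simp
  have hval : w ⟨m - 1, by omega⟩ = -(μ j₁ + rhoc m j₁) := by
    rw [hwlast, List.getLast_congr _ hne2 hw, List.getLast_append,
      dif_neg (by simpa using hBne), List.getLast_reverse, List.head_map, hhead]
  have hrho0 : rhoc m ⟨m - 1, by omega⟩ = 0 := by
    simp only [rhoc, Fin.val_mk]
    omega
  have heq : w ⟨m - 1, by omega⟩ - rhoc m ⟨m - 1, by omega⟩
      = -(μ j₁ + (m : ℤ) - 1 - (j₁ : ℕ)) := by
    rw [hval, hrho0]; simp only [rhoc]; ring
  refine ⟨heq, ?_⟩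
  rw [heq]
  have hj₁lt : (j₁ : ℕ) < m - 1 := by
    by_contra h
    have hj1 : (j₁ : ℕ) = m - 1 := by have := j₁.isLt; omega
    have hJsing : J = {j₁} := by
      apply Finset.eq_singleton_iff_unique_mem.2
      refine ⟨hj₁, fun x hx => ?_⟩
      have h1 : (j₁ : ℕ) ≤ (x : ℕ) := hmin x hx
      have h2 := x.isLt
      apply Fin.ext; omega
    rw [hJsing] at hJeven
    simp at hJeven
  have hmu2 : 0 ≤ μ ⟨m - 1, by omega⟩ + μ ⟨m - 2, by omega⟩ := by
    have := hμ.2 hm; omega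
  have h1 : μ ⟨m - 2, by omega⟩ ≤ μ j₁ := mu_anti μ hμ (by
    simp only [Fin.le_def, Fin.val_mk]; omega)
  have h2 : μ ⟨m - 1, by omega⟩ ≤ μ j₁ := mu_anti μ hμ (by
    simp only [Fin.le_def, Fin.val_mk]; omega)
  have hpos : 0 ≤ μ j₁ := by omega
  have hjm : (j₁ : ℕ) + 1 < m := by omega
  omega
end

section
/- Suppose V is a (g,K)-module whose restriction to K decomposes multiplicity-freely as ⊕_{ℓ∈N} W_ℓ with each W_ℓ irreducible, such that p·W_ℓ ⊆ W_{ℓ-1} ⊕ W_{ℓ+1} for all ℓ (with W_{-1} = 0). If V is completely reducible as a g-module and the map W_ℓ → W_{ℓ+1} induced by p-action is nonzero for every ℓ, then V is irreducible. -/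
/-- Abstract irreducibility criterion.  Let `V` be a module over a Lie algebra `L`
with a distinguished subspace `p ⊆ L` and subalgebra `k ⊆ L`, graded by
finite-dimensional subspaces `W ℓ` (`V = ⊕_ℓ W ℓ`), each `W ℓ` nonzero, `k`-invariant
and `k`-irreducible, with the grading multiplicity-free over `k` (every `k`-invariant
subspace of `V` is a sum of some of the `W ℓ`).  Assume `p·W ℓ ⊆ W (ℓ-1) ⊕ W (ℓ+1)`
(with `W (-1) = 0`), that `V` is completely reducible over `L` (every `L`-invariant
subspace has an `L`-invariant complement), and that for each `ℓ` the component of the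
`p`-action `W ℓ → W (ℓ+1)` is nonzero.  Then `V` is irreducible over `L`. -/
theorem stmt16 (L : Type*) [LieRing L] [LieAlgebra ℂ L]
    (V : Type*) [AddCommGroup V] [Module ℂ V] [LieRingModule L V] [LieModule ℂ L V]
    (k : LieSubalgebra ℂ L) (p : Submodule ℂ L)
    (W : ℕ → Submodule ℂ V)
    (hInternal : DirectSum.IsInternal W)
    (hFin : ∀ ℓ, Module.Finite ℂ (W ℓ))
    (hNe : ∀ ℓ, W ℓ ≠ ⊥)
    (hkInv : ∀ ℓ, ∀ x ∈ k, ∀ v ∈ W ℓ, ⁅x, v⁆ ∈ W ℓ)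
    (hkIrr : ∀ ℓ, ∀ U : Submodule ℂ V, U ≤ W ℓ →
      (∀ x ∈ k, ∀ v ∈ U, ⁅x, v⁆ ∈ U) → U = ⊥ ∨ U = W ℓ)
    (hMF : ∀ U : Submodule ℂ V, (∀ x ∈ k, ∀ v ∈ U, ⁅x, v⁆ ∈ U) →
      ∃ J : Set ℕ, U = ⨆ ℓ ∈ J, W ℓ)
    (hpW : ∀ ℓ, ∀ x ∈ p, ∀ v ∈ W ℓ,
      ⁅x, v⁆ ∈ (if ℓ = 0 then (⊥ : Submodule ℂ V) else W (ℓ - 1)) ⊔ W (ℓ + 1))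
    (hSemisimple : ∀ U : Submodule ℂ V, (∀ x : L, ∀ v ∈ U, ⁅x, v⁆ ∈ U) →
      ∃ U' : Submodule ℂ V, (∀ x : L, ∀ v ∈ U', ⁅x, v⁆ ∈ U') ∧
        U ⊓ U' = ⊥ ∧ U ⊔ U' = ⊤)
    (hRaise : ∀ ℓ, ∃ x ∈ p, ∃ v ∈ W ℓ,
      ⁅x, v⁆ ∉ (if ℓ = 0 then (⊥ : Submodule ℂ V) else W (ℓ - 1))) :
    ∀ U : Submodule ℂ V, (∀ x : L, ∀ v ∈ U, ⁅x, v⁆ ∈ U) → U = ⊥ ∨ U = ⊤ := by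

  intro U hU
  have htop := hInternal.submodule_iSup_eq_top
  have hind := hInternal.submodule_iSupIndep
  obtain ⟨J, hJ⟩ := hMF U (fun x _ v hv => hU x v hv)
  obtain ⟨U', hU', hinf, hsup⟩ := hSemisimple U hU
  obtain ⟨J', hJ'⟩ := hMF U' (fun x _ v hv => hU' x v hv)
  -- upward closure of index sets of invariant subspaces
  have key : ∀ (S : Submodule ℂ V) (I : Set ℕ), (∀ x : L, ∀ v ∈ S, ⁅x, v⁆ ∈ S) →
      S = ⨆ ℓ ∈ I, W ℓ → ∀ ℓ ∈ I, ℓ + 1 ∈ I := by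
    intro S I hS hSI ℓ hℓ
    by_contra hnot
    obtain ⟨x, hx, v, hv, hxv⟩ := hRaise ℓ
    have hvS : v ∈ S := by
      have h1 : W ℓ ≤ ⨆ m ∈ I, W m := le_biSup _ hℓ
      rw [hSI]; exact h1 hv
    have hmem := hpW ℓ x hx v hv
    obtain ⟨a, ha, b, hb, hab⟩ := Submodule.mem_sup.mp hmem
    have hbne : b ≠ 0 := by
      intro h
      apply hxv
      rw [← hab, h, add_zero]; exact ha
    set T : Submodule ℂ V := ⨆ (j) (_ : j ≠ ℓ + 1), W j with hT
    have hST : S ≤ T := by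
      rw [hSI]
      refine iSup₂_le fun m hm => ?_
      refine le_iSup₂_of_le m (fun h => hnot (h ▸ hm)) le_rfl
    have haT : a ∈ T := by
      by_cases h0 : ℓ = 0
      · simp only [h0, if_pos] at ha
        simp at ha
        simp [ha]
      · simp only [h0, if_neg, if_false] at ha
        have hne : ℓ - 1 ≠ ℓ + 1 := by omega
        have h1 : W (ℓ - 1) ≤ T := le_iSup₂_of_le (ℓ - 1) hne le_rfl
        exact h1 ha
    have hbT : b ∈ T := by
      have hxvS : ⁅x, v⁆ ∈ T := hST (hS x v hvS)
      have : b = ⁅x, v⁆ - a := by rw [← hab]; abel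
      rw [this]
      exact sub_mem hxvS haT
    have hb0 := (hind (ℓ + 1)).le_bot (Submodule.mem_inf.mpr ⟨hb, hbT⟩)
    exact hbne ((Submodule.mem_bot ℂ).mp hb0)
  have hall : ∀ I : Set ℕ, (∀ ℓ ∈ I, ℓ + 1 ∈ I) → 0 ∈ I → ∀ n, n ∈ I := by
    intro I h h0 n
    induction n with
    | zero => exact h0
    | succ n ih => exact h n ih
  have htot : ∀ I : Set ℕ, (∀ n, n ∈ I) → (⨆ ℓ ∈ I, W ℓ) = ⊤ := by
    intro I h
    rw [eq_top_iff, ← htop]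
    exact iSup_le fun n => le_biSup _ (h n)
  by_cases h0 : 0 ∈ J
  · right
    rw [hJ]
    exact htot J (hall J (key U J hU hJ) h0)
  · have h0' : 0 ∈ J' := by
      by_contra h0'
      obtain ⟨w, hw, hwne⟩ := Submodule.exists_mem_ne_zero_of_ne_bot (hNe 0)
      have hwT : w ∈ (⨆ (j) (_ : j ≠ 0), W j) := by
        have hwtop : w ∈ U ⊔ U' := by rw [hsup]; trivial
        have hle : U ⊔ U' ≤ ⨆ (j) (_ : j ≠ 0), W j := by
          refine sup_le ?_ ?_
          · rw [hJ]
            exact iSup₂_le fun m hm => le_iSup₂_of_le m (fun h => h0 (h ▸ hm)) le_rfl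
          · rw [hJ']
            exact iSup₂_le fun m hm => le_iSup₂_of_le m (fun h => h0' (h ▸ hm)) le_rfl
        exact hle hwtop
      exact hwne ((Submodule.mem_bot ℂ).mp ((hind 0).le_bot (Submodule.mem_inf.mpr ⟨hw, hwT⟩)))
    have hU'top : U' = ⊤ := by
      rw [hJ']
      exact htot J' (hall J' (key U' J' hU' hJ') h0')
    left
    rw [← hinf, hU'top, inf_top_eq]
end
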